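/- For every p > 1, every 2π-periodic (in each variable) function f : ℝ² → ℝ of bounded partial p-variation (f ∈ PBV_p) has bounded harmonic variation: PBV_p ⊆ HBV. -/

import Mathlib

open scoped ENNReal BigOperators
open Filter Set

noncomputable section

/-- A collection of `n` pairwise nonoverlapping subintervals of `T = [0, 2π]`,
given as pairs of endpoints. -/
def NonoverlapIcc (n : ℕ) (I : Fin n → ℝ × ℝ) : Prop :=
  (∀ i, 0 ≤ (I i).1 ∧ (I i).1 < (I i).2 ∧ (I i).2 ≤ 2 * Real.pi) ∧
    ∀ i j, i ≠ j → (I i).2 ≤ (I j).1 ∨ (I j).2 ≤ (I i).1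

/-- `f : ℝ² → ℝ` (curried) is `2π`-periodic in each variable. -/
def Periodic2 (f : ℝ → ℝ → ℝ) : Prop :=
  ∀ x y : ℝ, f (x + 2 * Real.pi) y = f x y ∧ f x (y + 2 * Real.pi) = f x y

/-- `ΛV₁(f)`: partial `Λ`-variation in the first variable. -/
def LamV1 (Λ : ℕ → ℝ) (f : ℝ → ℝ → ℝ) : ℝ≥0∞ :=
  ⨆ (y ∈ Icc (0:ℝ) (2 * Real.pi)) (n : ℕ) (I : Fin n → ℝ × ℝ) (_ : NonoverlapIcc n I),
    ENNReal.ofReal (∑ i, |f (I i).2 y - f (I i).1 y| / Λ ((i : ℕ) + 1))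

/-- `ΛV₂(f)`: partial `Λ`-variation in the second variable. -/
def LamV2 (Λ : ℕ → ℝ) (f : ℝ → ℝ → ℝ) : ℝ≥0∞ :=
  ⨆ (x ∈ Icc (0:ℝ) (2 * Real.pi)) (m : ℕ) (J : Fin m → ℝ × ℝ) (_ : NonoverlapIcc m J),
    ENNReal.ofReal (∑ j, |f x (J j).2 - f x (J j).1| / Λ ((j : ℕ) + 1))

/-- `ΛV₁,₂(f)`: mixed `Λ`-variation. -/
def LamV12 (Λ : ℕ → ℝ) (f : ℝ → ℝ → ℝ) : ℝ≥0∞ :=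
  ⨆ (n : ℕ) (m : ℕ) (I : Fin n → ℝ × ℝ) (J : Fin m → ℝ × ℝ)
    (_ : NonoverlapIcc n I) (_ : NonoverlapIcc m J),
    ENNReal.ofReal (∑ i, ∑ j,
      |f (I i).1 (J j).1 - f (I i).1 (J j).2 - f (I i).2 (J j).1 + f (I i).2 (J j).2| /
        (Λ ((i : ℕ) + 1) * Λ ((j : ℕ) + 1)))

/-- Total harmonic variation `HV(f) = HV₁(f) + HV₂(f) + HV₁,₂(f)` (with `λ_n = n`).
`f ∈ HBV` iff `HarmonicV f ≠ ⊤`. -/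
def HarmonicV (f : ℝ → ℝ → ℝ) : ℝ≥0∞ :=
  LamV1 (fun n => (n : ℝ)) f + LamV2 (fun n => (n : ℝ)) f + LamV12 (fun n => (n : ℝ)) f

/-- `Λ#V₁(f)`. -/
def LamSharpV1 (Λ : ℕ → ℝ) (f : ℝ → ℝ → ℝ) : ℝ≥0∞ :=
  ⨆ (n : ℕ) (I : Fin n → ℝ × ℝ) (y : Fin n → ℝ)
    (_ : NonoverlapIcc n I) (_ : ∀ i, y i ∈ Icc (0:ℝ) (2 * Real.pi)),
    ENNReal.ofReal (∑ i, |f (I i).2 (y i) - f (I i).1 (y i)| / Λ ((i : ℕ) + 1))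

/-- `Λ#V₂(f)`. -/
def LamSharpV2 (Λ : ℕ → ℝ) (f : ℝ → ℝ → ℝ) : ℝ≥0∞ :=
  ⨆ (m : ℕ) (J : Fin m → ℝ × ℝ) (x : Fin m → ℝ)
    (_ : NonoverlapIcc m J) (_ : ∀ j, x j ∈ Icc (0:ℝ) (2 * Real.pi)),
    ENNReal.ofReal (∑ j, |f (x j) (J j).2 - f (x j) (J j).1| / Λ ((j : ℕ) + 1))

/-- A collection of `n` pairwise nonoverlapping rectangles `[α,β] × [γ,δ] ⊆ T²`,
encoded as `((α, β), (γ, δ))`. -/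
def NonoverlapRect (n : ℕ) (A : Fin n → (ℝ × ℝ) × (ℝ × ℝ)) : Prop :=
  (∀ k, 0 ≤ (A k).1.1 ∧ (A k).1.1 < (A k).1.2 ∧ (A k).1.2 ≤ 2 * Real.pi ∧
        0 ≤ (A k).2.1 ∧ (A k).2.1 < (A k).2.2 ∧ (A k).2.2 ≤ 2 * Real.pi) ∧
    ∀ k l, k ≠ l →
      Disjoint (Ioo (A k).1.1 (A k).1.2 ×ˢ Ioo (A k).2.1 (A k).2.2)
        (Ioo (A l).1.1 (A l).1.2 ×ˢ Ioo (A l).2.1 (A l).2.2)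

/-- `Λ*V(f)` of Dyachenko–Waterman. -/
def LamStarV (Λ : ℕ → ℝ) (f : ℝ → ℝ → ℝ) : ℝ≥0∞ :=
  ⨆ (n : ℕ) (A : Fin n → (ℝ × ℝ) × (ℝ × ℝ)) (_ : NonoverlapRect n A),
    ENNReal.ofReal (∑ k,
      |f (A k).1.1 (A k).2.1 - f (A k).1.1 (A k).2.2 -
        f (A k).1.2 (A k).2.1 + f (A k).1.2 (A k).2.2| / Λ ((k : ℕ) + 1))

/-- Partial `p`-variation (first variable); with `Φ(u) = u^p`. -/
def PV1pow (p : ℝ) (f : ℝ → ℝ → ℝ) : ℝ≥0∞ :=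
  ⨆ (y ∈ Icc (0:ℝ) (2 * Real.pi)) (n : ℕ) (I : Fin n → ℝ × ℝ) (_ : NonoverlapIcc n I),
    ENNReal.ofReal (∑ i, |f (I i).2 y - f (I i).1 y| ^ p)

/-- Partial `p`-variation (second variable). -/
def PV2pow (p : ℝ) (f : ℝ → ℝ → ℝ) : ℝ≥0∞ :=
  ⨆ (x ∈ Icc (0:ℝ) (2 * Real.pi)) (m : ℕ) (J : Fin m → ℝ × ℝ) (_ : NonoverlapIcc m J),
    ENNReal.ofReal (∑ j, |f x (J j).2 - f x (J j).1| ^ p)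

/-- `V#_{Φ,1}(f)` for the class `B#V_Φ`. -/
def PhiSharpV1 (Φ : ℝ → ℝ) (f : ℝ → ℝ → ℝ) : ℝ≥0∞ :=
  ⨆ (n : ℕ) (I : Fin n → ℝ × ℝ) (y : Fin n → ℝ)
    (_ : NonoverlapIcc n I) (_ : ∀ i, y i ∈ Icc (0:ℝ) (2 * Real.pi)),
    ENNReal.ofReal (∑ i, Φ |f (I i).2 (y i) - f (I i).1 (y i)|)

/-- `V#_{Φ,2}(f)` for the class `B#V_Φ`. -/
def PhiSharpV2 (Φ : ℝ → ℝ) (f : ℝ → ℝ → ℝ) : ℝ≥0∞ :=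
  ⨆ (m : ℕ) (J : Fin m → ℝ × ℝ) (x : Fin m → ℝ)
    (_ : NonoverlapIcc m J) (_ : ∀ j, x j ∈ Icc (0:ℝ) (2 * Real.pi)),
    ENNReal.ofReal (∑ j, Φ |f (x j) (J j).2 - f (x j) (J j).1|)

/-- Partial modulus of variation `v₁(n, f)`. -/
def modV1 (f : ℝ → ℝ → ℝ) (n : ℕ) : ℝ≥0∞ :=
  ⨆ (y ∈ Icc (0:ℝ) (2 * Real.pi)) (I : Fin n → ℝ × ℝ) (_ : NonoverlapIcc n I),
    ENNReal.ofReal (∑ i, |f (I i).2 y - f (I i).1 y|)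

/-- Partial modulus of variation `v₂(m, f)`. -/
def modV2 (f : ℝ → ℝ → ℝ) (m : ℕ) : ℝ≥0∞ :=
  ⨆ (x ∈ Icc (0:ℝ) (2 * Real.pi)) (J : Fin m → ℝ × ℝ) (_ : NonoverlapIcc m J),
    ENNReal.ofReal (∑ j, |f x (J j).2 - f x (J j).1|)

/-- `v₁#(n, f)`. -/
def modSharpV1 (f : ℝ → ℝ → ℝ) (n : ℕ) : ℝ≥0∞ :=
  ⨆ (I : Fin n → ℝ × ℝ) (y : Fin n → ℝ)
    (_ : NonoverlapIcc n I) (_ : ∀ i, y i ∈ Icc (0:ℝ) (2 * Real.pi)),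
    ENNReal.ofReal (∑ i, |f (I i).2 (y i) - f (I i).1 (y i)|)

/-- `v₂#(m, f)`. -/
def modSharpV2 (f : ℝ → ℝ → ℝ) (m : ℕ) : ℝ≥0∞ :=
  ⨆ (J : Fin m → ℝ × ℝ) (x : Fin m → ℝ)
    (_ : NonoverlapIcc m J) (_ : ∀ j, x j ∈ Icc (0:ℝ) (2 * Real.pi)),
    ENNReal.ofReal (∑ j, |f (x j) (J j).2 - f (x j) (J j).1|)

/-- The shifted sequence `Λ_n = {λ_k}_{k=n}^∞`: its `i`-th member (`i ≥ 1`) is `λ_{n+i-1}`. -/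
def ShiftSeq (Λ : ℕ → ℝ) (n : ℕ) : ℕ → ℝ := fun k => Λ (k + n - 1)

/-- The sequence `λ_n = n / log n` (for `n ≥ 2`; the value at `n ≤ 1` is irrelevant). -/
def nlogSeq : ℕ → ℝ := fun n => if n ≤ 1 then 1 else (n : ℝ) / Real.log n

/-- Double Fourier coefficient
`f̂(m,n) = (1/(4π²)) ∫₀^{2π}∫₀^{2π} f(x,y) e^{-imx} e^{-iny} dx dy`. -/
def fCoef (f : ℝ → ℝ → ℝ) (m n : ℤ) : ℂ :=
  (4 * (Real.pi : ℂ) ^ 2)⁻¹ *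
    ∫ x in (0:ℝ)..(2 * Real.pi), ∫ y in (0:ℝ)..(2 * Real.pi),
      (f x y : ℂ) * Complex.exp (-(Complex.I * (m : ℂ) * (x : ℂ))) *
        Complex.exp (-(Complex.I * (n : ℂ) * (y : ℂ)))

/-- Rectangular partial sum `S_{M,N}[f,(x,y)]` of the double Fourier series. -/
def SRect (f : ℝ → ℝ → ℝ) (M N : ℕ) (x y : ℝ) : ℂ :=
  ∑ m ∈ Finset.Icc (-(M : ℤ)) (M : ℤ), ∑ n ∈ Finset.Icc (-(N : ℤ)) (N : ℤ),
    fCoef f m n * Complex.exp (Complex.I * (m : ℂ) * (x : ℂ)) *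
      Complex.exp (Complex.I * (n : ℂ) * (y : ℂ))

/-- One-sided punctured neighborhood filter: from the right if `s = true`,
from the left if `s = false`. -/
def sideF (x : ℝ) (s : Bool) : Filter ℝ :=
  if s then nhdsWithin x (Ioi x) else nhdsWithin x (Iio x)

/-- `HasQuadLim f x y s t L` means the open-quadrant limit of `f` at `(x,y)` from the
quadrant with horizontal direction `s` and vertical direction `t` exists and equals `L`
(e.g. `s = true, t = false` is `f(x+0, y-0)`). -/
def HasQuadLim (f : ℝ → ℝ → ℝ) (x y : ℝ) (s t : Bool) (L : ℝ) : Prop :=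
  Tendsto (fun p : ℝ × ℝ => f p.1 p.2) ((sideF x s) ×ˢ (sideF y t)) (nhds L)

/-- Cesàro numbers `A_k^α = (α+1)(α+2)⋯(α+k)/k!`. -/
def AA (α : ℝ) : ℕ → ℝ
  | 0 => 1
  | k + 1 => AA α k * (α + ((k : ℝ) + 1)) / ((k : ℝ) + 1)

/-- Cesàro `(C; α, β)` means of the double Fourier series of `f`. -/
def cesaro (f : ℝ → ℝ → ℝ) (α β : ℝ) (n m : ℕ) (x y : ℝ) : ℂ :=
  ((1 / (AA α n * AA β m) : ℝ) : ℂ) *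
    ∑ i ∈ Finset.range (n + 1), ∑ j ∈ Finset.range (m + 1),
      ((AA (α - 1) (n - i) * AA (β - 1) (m - j) : ℝ) : ℂ) * SRect f i j x y

end

/-! Hölder's inequality with the conjugate exponent `q` gives `∑ aᵢ / i ≤ ‖a‖_p ζ(q)^(1/q)`, which
bounds `HV₁` and `HV₂`. For `HV₁,₂`, every row and every column of the matrix of rectangle
increments `|f(Iᵢ, Jⱼ)|` has `p`-sum at most `2^p` times a partial `p`-variation, and for
`1/q < r < 1` one has `1/(i j) ≤ i^(-(2-r)) j^(-r) + j^(-(2-r)) i^(-r)`: Hölder along rows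
(columns) against the `q`-summable weight `j^(-r)`, then summing `∑ i^(-(2-r)) < ∞`. -/

open Finset

lemma abs_sub_rpow_le {u v p : ℝ} (hp : 1 ≤ p) :
    |u - v| ^ p ≤ 2 ^ (p - 1) * (|u| ^ p + |v| ^ p) := by
  calc |u - v| ^ p ≤ (|u| + |v|) ^ p :=
        Real.rpow_le_rpow (abs_nonneg _) (abs_sub _ _) (by linarith)
    _ ≤ 2 ^ (p - 1) * (|u| ^ p + |v| ^ p) := by
        have := NNReal.rpow_add_le_mul_rpow_add_rpow ⟨|u|, abs_nonneg u⟩ ⟨|v|, abs_nonneg v⟩ hp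
        exact_mod_cast this

lemma sum_abs_sub_rpow_le {ι : Type*} (s : Finset ι) (u v : ι → ℝ) {p : ℝ} (hp : 1 ≤ p) :
    ∑ i ∈ s, |u i - v i| ^ p ≤ 2 ^ (p - 1) * (∑ i ∈ s, |u i| ^ p + ∑ i ∈ s, |v i| ^ p) := by
  rw [← sum_add_distrib, mul_sum]
  exact sum_le_sum fun i _ => abs_sub_rpow_le hp

lemma inv_mul_le_rpow_neg_mul_rpow_neg {x y r : ℝ} (hx : 0 < x) (hxy : x ≤ y) (hr : r ≤ 1) :
    (x * y)⁻¹ ≤ x ^ (-(2 - r)) * y ^ (-r) := by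
  have hy : 0 < y := hx.trans_le hxy
  have hx' : x ^ (-(2 - r)) = x⁻¹ * (x ^ (1 - r))⁻¹ := by
    rw [← Real.rpow_neg_one, ← Real.rpow_neg hx.le, ← Real.rpow_add hx]; ring_nf
  have hy' : y ^ (-r) = y⁻¹ * y ^ (1 - r) := by
    rw [← Real.rpow_neg_one, ← Real.rpow_add hy]; ring_nf
  have hxy' : x ^ (1 - r) ≤ y ^ (1 - r) := Real.rpow_le_rpow hx.le hxy (by linarith)
  have hxr : 0 < x ^ (1 - r) := Real.rpow_pos_of_pos hx _
  rw [hx', hy', mul_inv]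
  calc x⁻¹ * y⁻¹ = x⁻¹ * (x ^ (1 - r))⁻¹ * (y⁻¹ * x ^ (1 - r)) := by field_simp
    _ ≤ x⁻¹ * (x ^ (1 - r))⁻¹ * (y⁻¹ * y ^ (1 - r)) := by gcongr

lemma inv_mul_le_rpow_neg_add {x y r : ℝ} (hx : 0 < x) (hy : 0 < y) (hr : r ≤ 1) :
    (x * y)⁻¹ ≤ x ^ (-(2 - r)) * y ^ (-r) + y ^ (-(2 - r)) * x ^ (-r) := by
  have h₁ := mul_nonneg (Real.rpow_nonneg hx.le (-(2 - r))) (Real.rpow_nonneg hy.le (-r))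
  have h₂ := mul_nonneg (Real.rpow_nonneg hy.le (-(2 - r))) (Real.rpow_nonneg hx.le (-r))
  rcases le_total x y with hxy | hyx
  · linarith [inv_mul_le_rpow_neg_mul_rpow_neg hx hxy hr]
  · linarith [mul_comm x y ▸ inv_mul_le_rpow_neg_mul_rpow_neg hy hyx hr]

lemma summable_succ_rpow_neg {s : ℝ} (hs : 1 < s) :
    Summable fun k : ℕ => ((k : ℝ) + 1) ^ (-s) := by
  have := (summable_nat_add_iff 1).2 (Real.summable_nat_rpow.2 (by linarith : -s < -1))
  simpa using this

lemma sum_fin_le_tsum {w : ℕ → ℝ} (hw : ∀ k, 0 ≤ w k) (hs : Summable w) (n : ℕ) :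
    ∑ i : Fin n, w i ≤ ∑' k, w k := by
  rw [Fin.sum_univ_eq_sum_range]
  exact hs.sum_le_tsum _ fun k _ => hw k

section Holder

variable {p q : ℝ} (hpq : p.HolderConjugate q)
include hpq

lemma sum_mul_rpow_neg_le {n : ℕ} {a : Fin n → ℝ} (ha : ∀ i, 0 ≤ a i) {r : ℝ} (hrq : 1 < r * q)
    {B : ℝ} (hB : ∑ i, a i ^ p ≤ B) :
    ∑ i, a i * (((i : ℕ) : ℝ) + 1) ^ (-r) ≤
      B ^ (1 / p) * (∑' k : ℕ, ((k : ℝ) + 1) ^ (-(r * q))) ^ (1 / q) := by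
  have hpow : ∀ k : ℕ, (((k : ℝ) + 1) ^ (-r)) ^ q = ((k : ℝ) + 1) ^ (-(r * q)) := fun k => by
    rw [← Real.rpow_mul (by positivity), neg_mul]
  have hw : ∑ i : Fin n, ((((i : ℕ) : ℝ) + 1) ^ (-r)) ^ q ≤
      ∑' k : ℕ, ((k : ℝ) + 1) ^ (-(r * q)) := by
    simp only [hpow]
    exact sum_fin_le_tsum (fun k => by positivity) (summable_succ_rpow_neg hrq) n
  refine (Real.inner_le_Lp_mul_Lq_of_nonneg univ hpq (fun i _ => ha i)
    (fun i _ => by positivity)).trans ?_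
  have hsum : 0 ≤ ∑ i, a i ^ p := sum_nonneg fun i _ => Real.rpow_nonneg (ha i) p
  have := hpq.one_div_nonneg
  have := hpq.symm.one_div_nonneg
  gcongr
  exact Real.rpow_nonneg (hsum.trans hB) _

lemma sum_sum_mul_rpow_neg_le {n m : ℕ} {g : Fin n → Fin m → ℝ} (hg : ∀ i j, 0 ≤ g i j)
    {r : ℝ} (hr : r < 1) (hrq : 1 < r * q) {R : ℝ} (hR0 : 0 ≤ R)
    (hR : ∀ i, ∑ j, g i j ^ p ≤ R) :
    ∑ i, ∑ j, g i j * ((((i : ℕ) : ℝ) + 1) ^ (-(2 - r)) * (((j : ℕ) : ℝ) + 1) ^ (-r)) ≤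
      R ^ (1 / p) * (∑' k : ℕ, ((k : ℝ) + 1) ^ (-(r * q))) ^ (1 / q) *
        ∑' k : ℕ, ((k : ℝ) + 1) ^ (-(2 - r)) := by
  set Z := R ^ (1 / p) * (∑' k : ℕ, ((k : ℝ) + 1) ^ (-(r * q))) ^ (1 / q)
  have hZ : 0 ≤ Z := mul_nonneg (Real.rpow_nonneg hR0 _)
    (Real.rpow_nonneg (tsum_nonneg fun k => by positivity) _)
  calc ∑ i, ∑ j, g i j * ((((i : ℕ) : ℝ) + 1) ^ (-(2 - r)) * (((j : ℕ) : ℝ) + 1) ^ (-r))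
      = ∑ i : Fin n, (((i : ℕ) : ℝ) + 1) ^ (-(2 - r)) *
          ∑ j, g i j * (((j : ℕ) : ℝ) + 1) ^ (-r) := by
        simp only [mul_sum]
        exact sum_congr rfl fun i _ => sum_congr rfl fun j _ => by ring
    _ ≤ ∑ i : Fin n, (((i : ℕ) : ℝ) + 1) ^ (-(2 - r)) * Z := by
        gcongr with i
        exact sum_mul_rpow_neg_le hpq (hg i) hrq (hR i)
    _ ≤ Z * ∑' k : ℕ, ((k : ℝ) + 1) ^ (-(2 - r)) := by
        rw [← sum_mul, mul_comm]
        gcongr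
        exact sum_fin_le_tsum (fun k => by positivity) (summable_succ_rpow_neg (by linarith)) n

lemma sum_sum_div_le {n m : ℕ} {g : Fin n → Fin m → ℝ} (hg : ∀ i j, 0 ≤ g i j)
    {r : ℝ} (hr : r < 1) (hrq : 1 < r * q) {R C : ℝ} (hR0 : 0 ≤ R) (hC0 : 0 ≤ C)
    (hR : ∀ i, ∑ j, g i j ^ p ≤ R) (hC : ∀ j, ∑ i, g i j ^ p ≤ C) :
    ∑ i, ∑ j, g i j / ((((i : ℕ) : ℝ) + 1) * (((j : ℕ) : ℝ) + 1)) ≤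
      (R ^ (1 / p) + C ^ (1 / p)) * (∑' k : ℕ, ((k : ℝ) + 1) ^ (-(r * q))) ^ (1 / q) *
        ∑' k : ℕ, ((k : ℝ) + 1) ^ (-(2 - r)) := by
  calc ∑ i, ∑ j, g i j / ((((i : ℕ) : ℝ) + 1) * (((j : ℕ) : ℝ) + 1))
      ≤ ∑ i, ∑ j, (g i j * ((((i : ℕ) : ℝ) + 1) ^ (-(2 - r)) * (((j : ℕ) : ℝ) + 1) ^ (-r)) +
          g i j * ((((j : ℕ) : ℝ) + 1) ^ (-(2 - r)) * (((i : ℕ) : ℝ) + 1) ^ (-r))) := by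
        gcongr with i _ j _
        rw [div_eq_mul_inv, ← mul_add]
        exact mul_le_mul_of_nonneg_left (inv_mul_le_rpow_neg_add (by positivity) (by positivity)
          hr.le) (hg i j)
    _ = ∑ i, ∑ j, g i j * ((((i : ℕ) : ℝ) + 1) ^ (-(2 - r)) * (((j : ℕ) : ℝ) + 1) ^ (-r)) +
          ∑ j, ∑ i, g i j * ((((j : ℕ) : ℝ) + 1) ^ (-(2 - r)) * (((i : ℕ) : ℝ) + 1) ^ (-r)) := by
        simp only [sum_add_distrib]
        exact congrArg _ sum_comm
    _ ≤ _ := by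
        rw [add_mul, add_mul]
        exact add_le_add (sum_sum_mul_rpow_neg_le hpq hg hr hrq hR0 hR)
          (sum_sum_mul_rpow_neg_le hpq (fun j i => hg i j) hr hrq hC0 hC)

end Holder

section Variation

lemma NonoverlapIcc.fst_mem {n : ℕ} {I : Fin n → ℝ × ℝ} (hI : NonoverlapIcc n I) (i : Fin n) :
    (I i).1 ∈ Icc 0 (2 * Real.pi) :=
  ⟨(hI.1 i).1, (hI.1 i).2.1.le.trans (hI.1 i).2.2⟩

lemma NonoverlapIcc.snd_mem {n : ℕ} {I : Fin n → ℝ × ℝ} (hI : NonoverlapIcc n I) (i : Fin n) :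
    (I i).2 ∈ Icc 0 (2 * Real.pi) :=
  ⟨(hI.1 i).1.trans (hI.1 i).2.1.le, (hI.1 i).2.2⟩

lemma PV2pow_eq_PV1pow_flip (p : ℝ) (f : ℝ → ℝ → ℝ) : PV2pow p f = PV1pow p (flip f) := rfl

lemma LamV2_eq_LamV1_flip (Λ : ℕ → ℝ) (f : ℝ → ℝ → ℝ) : LamV2 Λ f = LamV1 Λ (flip f) := rfl

variable {p : ℝ} {f : ℝ → ℝ → ℝ}

lemma sum_rpow_le_toReal_PV1pow (h : PV1pow p f ≠ ⊤) {y : ℝ} (hy : y ∈ Icc 0 (2 * Real.pi))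
    {n : ℕ} {I : Fin n → ℝ × ℝ} (hI : NonoverlapIcc n I) :
    ∑ i, |f (I i).2 y - f (I i).1 y| ^ p ≤ (PV1pow p f).toReal := by
  rw [← ENNReal.ofReal_le_iff_le_toReal h]
  exact le_iSup₂_of_le y hy <| le_iSup₂_of_le n I <| le_iSup_of_le hI le_rfl

lemma sum_rpow_le_toReal_PV2pow (h : PV2pow p f ≠ ⊤) {x : ℝ} (hx : x ∈ Icc 0 (2 * Real.pi))
    {m : ℕ} {J : Fin m → ℝ × ℝ} (hJ : NonoverlapIcc m J) :
    ∑ j, |f x (J j).2 - f x (J j).1| ^ p ≤ (PV2pow p f).toReal :=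
  sum_rpow_le_toReal_PV1pow (f := flip f) h hx hJ

lemma sum_abs_rect_rpow_le_PV2pow (hp : 1 ≤ p) (h : PV2pow p f ≠ ⊤) {a b : ℝ}
    (ha : a ∈ Icc 0 (2 * Real.pi)) (hb : b ∈ Icc 0 (2 * Real.pi)) {m : ℕ}
    {J : Fin m → ℝ × ℝ} (hJ : NonoverlapIcc m J) :
    ∑ j, |f a (J j).1 - f a (J j).2 - f b (J j).1 + f b (J j).2| ^ p ≤
      2 ^ (p - 1) * ((PV2pow p f).toReal + (PV2pow p f).toReal) := by
  calc ∑ j, |f a (J j).1 - f a (J j).2 - f b (J j).1 + f b (J j).2| ^ p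
      = ∑ j, |(f b (J j).2 - f b (J j).1) - (f a (J j).2 - f a (J j).1)| ^ p :=
        sum_congr rfl fun j _ => by ring_nf
    _ ≤ _ := (sum_abs_sub_rpow_le _ _ _ hp).trans <| by
        gcongr
        exacts [sum_rpow_le_toReal_PV2pow h hb hJ, sum_rpow_le_toReal_PV2pow h ha hJ]

lemma sum_abs_rect_rpow_le_PV1pow (hp : 1 ≤ p) (h : PV1pow p f ≠ ⊤) {c d : ℝ}
    (hc : c ∈ Icc 0 (2 * Real.pi)) (hd : d ∈ Icc 0 (2 * Real.pi)) {n : ℕ}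
    {I : Fin n → ℝ × ℝ} (hI : NonoverlapIcc n I) :
    ∑ i, |f (I i).1 c - f (I i).1 d - f (I i).2 c + f (I i).2 d| ^ p ≤
      2 ^ (p - 1) * ((PV1pow p f).toReal + (PV1pow p f).toReal) :=
  (sum_abs_rect_rpow_le_PV2pow (f := flip f) hp h hc hd hI).trans_eq' <|
    sum_congr rfl fun i _ => by simp only [flip]; ring_nf

variable {q : ℝ} (hpq : p.HolderConjugate q)
include hpq

lemma LamV1_ne_top (h : PV1pow p f ≠ ⊤) : LamV1 (fun n => (n : ℝ)) f ≠ ⊤ := by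
  refine ne_top_of_le_ne_top (b := ENNReal.ofReal ((PV1pow p f).toReal ^ (1 / p) *
    (∑' k : ℕ, ((k : ℝ) + 1) ^ (-(1 * q))) ^ (1 / q))) ENNReal.ofReal_ne_top ?_
  refine iSup₂_le fun y hy => iSup₂_le fun n I => iSup_le fun hI => ENNReal.ofReal_le_ofReal ?_
  have hB := sum_rpow_le_toReal_PV1pow h hy hI
  convert sum_mul_rpow_neg_le hpq (a := fun i => |f (I i).2 y - f (I i).1 y|)
    (fun i => abs_nonneg _) (r := 1) (by simpa using hpq.symm.lt) hB using 2 with i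
  push_cast
  rw [Real.rpow_neg_one, div_eq_mul_inv]

lemma LamV12_ne_top (h₁ : PV1pow p f ≠ ⊤) (h₂ : PV2pow p f ≠ ⊤) :
    LamV12 (fun n => (n : ℝ)) f ≠ ⊤ := by
  have hp : 1 ≤ p := hpq.lt.le
  have hq : 1 < q := hpq.symm.lt
  set B₁ := (PV1pow p f).toReal
  set B₂ := (PV2pow p f).toReal
  have hR : 0 ≤ 2 ^ (p - 1) * (B₂ + B₂) := by positivity
  have hC : 0 ≤ 2 ^ (p - 1) * (B₁ + B₁) := by positivity
  set r := (1 + q⁻¹) / 2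
  have hr : r < 1 := by have := inv_lt_one_of_one_lt₀ hq; simp only [r]; linarith
  have hrq : 1 < r * q := by simp only [r]; field_simp; linarith
  refine ne_top_of_le_ne_top (b := ENNReal.ofReal
    (((2 ^ (p - 1) * (B₂ + B₂)) ^ (1 / p) + (2 ^ (p - 1) * (B₁ + B₁)) ^ (1 / p)) *
      (∑' k : ℕ, ((k : ℝ) + 1) ^ (-(r * q))) ^ (1 / q) *
        ∑' k : ℕ, ((k : ℝ) + 1) ^ (-(2 - r)))) ENNReal.ofReal_ne_top ?_
  refine iSup₂_le fun n m => iSup₂_le fun I J => iSup₂_le fun hI hJ =>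
    ENNReal.ofReal_le_ofReal ?_
  convert sum_sum_div_le hpq (g := fun i j => |f (I i).1 (J j).1 - f (I i).1 (J j).2 -
    f (I i).2 (J j).1 + f (I i).2 (J j).2|) (fun _ _ => abs_nonneg _) hr hrq hR hC
    (fun i => sum_abs_rect_rpow_le_PV2pow hp h₂ (hI.fst_mem i) (hI.snd_mem i) hJ)
    (fun j => sum_abs_rect_rpow_le_PV1pow hp h₁ (hJ.fst_mem j) (hJ.snd_mem j) hI)
    using 4 with i _ j _
  push_cast
  rfl

end Variation

theorem stmt2_general (p : ℝ) (hp : 1 < p) (f : ℝ → ℝ → ℝ)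
    (h1 : PV1pow p f ≠ ⊤) (h2 : PV2pow p f ≠ ⊤) :
    HarmonicV f ≠ ⊤ := by
  have hpq := Real.HolderConjugate.conjExponent hp
  rw [PV2pow_eq_PV1pow_flip] at h2
  rw [HarmonicV, LamV2_eq_LamV1_flip, ENNReal.add_ne_top, ENNReal.add_ne_top]
  exact ⟨⟨LamV1_ne_top hpq h1, LamV1_ne_top hpq h2⟩, LamV12_ne_top hpq h1 h2⟩

/-- for every `p > 1`, `PBV_p ⊆ HBV`. -/
theorem stmt2 (p : ℝ) (hp : 1 < p) (f : ℝ → ℝ → ℝ) (hper : Periodic2 f)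
    (h1 : PV1pow p f ≠ ⊤) (h2 : PV2pow p f ≠ ⊤) :
    HarmonicV f ≠ ⊤ :=
  stmt2_general p hp f h1 h2
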